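/- For integers n ≥ 3 and 2 ≤ k ≤ n, the function p ↦ T_p := ∫_{−∞}^{0} {1 + e^{−2η − 2p}[1 − e^{nη}]^{1/k}}^{−1/2} dη is well-defined (the integral converges for every p ∈ ℝ), continuous, and strictly increasing in p, with T_p → 0 as p → −∞ and T_p → ∞ as p → +∞. -/

import Mathlib

open Real MeasureTheory Filter

/-- The integrand `{1 + e^{−2η − 2p}[1 − e^{nη}]^{1/k}}^{−1/2}` for `η < 0`. -/
noncomputable def Tintegrand (n k : ℕ) (p η : ℝ) : ℝ :=
  (1 + Real.exp (-2 * η - 2 * p) * (1 - Real.exp ((n : ℝ) * η)) ^ ((1 : ℝ) / k))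
    ^ (-(1 : ℝ) / 2)

/-- `T_p = ∫_{−∞}^0 {1 + e^{−2η−2p}[1 − e^{nη}]^{1/k}}^{−1/2} dη`. -/
noncomputable def Tp (n k : ℕ) (p : ℝ) : ℝ :=
  ∫ η in Set.Iio (0 : ℝ), Tintegrand n k p η

/-!
For `η < 0` the integrand is positive, at most `1`, strictly increasing in `p`, and (dropping
the `1` under the root) at most `e^{η + p} [1 − e^{nη}]^{−1/(2k)}`, hence `O(e^η)` as `η → −∞`
locally uniformly in `p`. Dominated convergence then gives integrability, continuity and
`T_p → 0` as `p → −∞`. For `A ≥ 0` the integrand at `p = A` is at least `1/2` on `[−A, 0)`,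
so `T_A ≥ A/2`.
-/

open Set Topology

lemma setIntegral_lt_setIntegral_of_forall_lt {X : Type*} [MeasurableSpace X] {μ : Measure X}
    {s : Set X} {f g : X → ℝ} (hs : MeasurableSet s) (hμs : μ s ≠ 0)
    (hf : IntegrableOn f s μ) (hg : IntegrableOn g s μ) (hlt : ∀ x ∈ s, f x < g x) :
    ∫ x in s, f x ∂μ < ∫ x in s, g x ∂μ := by
  have hsupp : Function.support (g - f) ∩ s = s :=
    inter_eq_right.mpr fun x hx => (sub_pos.mpr (hlt x hx)).ne'
  have hpos : 0 < ∫ x in s, (g - f) x ∂μ := by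
    rw [setIntegral_pos_iff_support_of_nonneg_ae _ (hg.sub hf), hsupp]
    · exact pos_iff_ne_zero.mpr hμs
    · exact (ae_restrict_iff' hs).mpr
        (Eventually.of_forall fun x hx => (sub_pos.mpr (hlt x hx)).le)
  rw [Pi.sub_def, integral_sub hg hf] at hpos
  linarith

section

variable {n k : ℕ} {p η : ℝ}

noncomputable def rootFactor (n k : ℕ) (η : ℝ) : ℝ := (1 - exp (n * η)) ^ ((1 : ℝ) / k)

lemma Tintegrand_eq_rootFactor :
    Tintegrand n k p η = (1 + exp (-2 * η - 2 * p) * rootFactor n k η) ^ (-(1 : ℝ) / 2) := rfl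

lemma one_sub_exp_mul_pos {a : ℝ} (ha : 0 < a) (hη : η < 0) : 0 < 1 - exp (a * η) := by
  linarith [exp_lt_one_iff.mpr (mul_neg_of_pos_of_neg ha hη)]

lemma rootFactor_pos (hn : 0 < n) (hη : η < 0) : 0 < rootFactor n k η :=
  rpow_pos_of_pos (one_sub_exp_mul_pos (Nat.cast_pos.mpr hn) hη) _

lemma rootFactor_le_one (hn : 0 < n) (hη : η < 0) : rootFactor n k η ≤ 1 :=
  rpow_le_one (one_sub_exp_mul_pos (Nat.cast_pos.mpr hn) hη).le
    (by linarith [exp_pos (n * η)]) (by positivity)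

lemma rootFactor_antitoneOn (hn : 0 < n) : AntitoneOn (rootFactor n k) (Iio 0) := by
  intro x _ y hy hxy
  refine rpow_le_rpow (one_sub_exp_mul_pos (Nat.cast_pos.mpr hn) hy).le ?_ (by positivity)
  gcongr

lemma one_le_one_add_exp_mul_rootFactor (hn : 0 < n) (hη : η < 0) :
    1 ≤ 1 + exp (-2 * η - 2 * p) * rootFactor n k η := by
  have := rootFactor_pos (k := k) hn hη
  have := exp_pos (-2 * η - 2 * p)
  nlinarith

lemma one_add_exp_mul_rootFactor_pos (hn : 0 < n) (hη : η < 0) :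
    0 < 1 + exp (-2 * η - 2 * p) * rootFactor n k η :=
  zero_lt_one.trans_le (one_le_one_add_exp_mul_rootFactor hn hη)

lemma Tintegrand_pos (hn : 0 < n) (hη : η < 0) : 0 < Tintegrand n k p η :=
  rpow_pos_of_pos (one_add_exp_mul_rootFactor_pos hn hη) _

lemma Tintegrand_le_one (hn : 0 < n) (hη : η < 0) : Tintegrand n k p η ≤ 1 :=
  rpow_le_one_of_one_le_of_nonpos (one_le_one_add_exp_mul_rootFactor hn hη) (by norm_num)

lemma strictMono_Tintegrand (hn : 0 < n) (hη : η < 0) : StrictMono (Tintegrand n k · η) := by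
  intro p q hpq
  refine rpow_lt_rpow_of_neg (one_add_exp_mul_rootFactor_pos hn hη) ?_ (by norm_num)
  have := rootFactor_pos (k := k) hn hη
  gcongr

lemma Tintegrand_le_exp_mul (hn : 0 < n) (hη : η < 0) :
    Tintegrand n k p η ≤ exp (η + p) * rootFactor n k η ^ (-(1 : ℝ) / 2) := by
  have hg := rootFactor_pos (k := k) hn hη
  rw [Tintegrand_eq_rootFactor]
  calc _ ≤ (exp (-2 * η - 2 * p) * rootFactor n k η) ^ (-(1 : ℝ) / 2) :=
        rpow_le_rpow_of_nonpos (by positivity) (by linarith) (by norm_num)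
    _ = exp (η + p) * rootFactor n k η ^ (-(1 : ℝ) / 2) := by
        rw [mul_rpow (exp_nonneg _) hg.le, ← exp_mul]
        ring_nf

noncomputable def dominatingConst (n k : ℕ) (p : ℝ) : ℝ :=
  max (exp 1) (exp p * rootFactor n k (-1) ^ (-(1 : ℝ) / 2))

lemma Tintegrand_le_dominatingConst_mul_exp (hn : 0 < n) (hη : η < 0) :
    Tintegrand n k p η ≤ dominatingConst n k p * exp η := by
  rcases le_or_gt η (-1) with hη1 | hη1
  · have hg : rootFactor n k η ^ (-(1 : ℝ) / 2) ≤ rootFactor n k (-1) ^ (-(1 : ℝ) / 2) :=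
      rpow_le_rpow_of_nonpos (rootFactor_pos hn (by norm_num))
        (rootFactor_antitoneOn hn hη (show (-1 : ℝ) < 0 by norm_num) hη1) (by norm_num)
    calc Tintegrand n k p η ≤ exp (η + p) * rootFactor n k η ^ (-(1 : ℝ) / 2) :=
          Tintegrand_le_exp_mul hn hη
      _ ≤ exp (η + p) * rootFactor n k (-1) ^ (-(1 : ℝ) / 2) := by gcongr
      _ = exp p * rootFactor n k (-1) ^ (-(1 : ℝ) / 2) * exp η := by rw [exp_add]; ring
      _ ≤ dominatingConst n k p * exp η := by gcongr; exact le_max_right _ _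
  · calc Tintegrand n k p η ≤ 1 := Tintegrand_le_one hn hη
      _ ≤ exp (1 + η) := one_le_exp (by linarith)
      _ ≤ dominatingConst n k p * exp η := by rw [exp_add]; gcongr; exact le_max_left _ _

lemma measurable_Tintegrand : Measurable (Tintegrand n k p) := by
  unfold Tintegrand
  fun_prop

lemma integrableOn_const_mul_exp_Iio (C : ℝ) : IntegrableOn (fun η => C * exp η) (Iio 0) :=
  ((integrableOn_exp_Iic 0).mono_set Iio_subset_Iic_self).const_mul C

lemma ae_norm_Tintegrand_le (hn : 0 < n) {p₁ : ℝ} (hp : p ≤ p₁) :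
    ∀ᵐ η ∂volume.restrict (Iio 0), ‖Tintegrand n k p η‖ ≤ dominatingConst n k p₁ * exp η := by
  refine (ae_restrict_iff' measurableSet_Iio).mpr (Eventually.of_forall fun η hη => ?_)
  rw [norm_of_nonneg (Tintegrand_pos hn hη).le]
  exact ((strictMono_Tintegrand hn hη).monotone hp).trans
    (Tintegrand_le_dominatingConst_mul_exp hn hη)

lemma integrableOn_Tintegrand (hn : 0 < n) (p : ℝ) :
    IntegrableOn (Tintegrand n k p) (Iio 0) :=
  (integrableOn_const_mul_exp_Iio _).mono' measurable_Tintegrand.aestronglyMeasurable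
    (ae_norm_Tintegrand_le hn le_rfl)

lemma continuous_Tp (hn : 0 < n) : Continuous (Tp n k) := by
  refine continuous_iff_continuousAt.mpr fun p₀ => continuousAt_of_dominated
    (Eventually.of_forall fun _ => measurable_Tintegrand.aestronglyMeasurable) ?_
    (integrableOn_const_mul_exp_Iio (dominatingConst n k (p₀ + 1))) ?_
  · filter_upwards [eventually_le_nhds (lt_add_one p₀)] with p hp
      using ae_norm_Tintegrand_le hn hp
  · refine (ae_restrict_iff' measurableSet_Iio).mpr (Eventually.of_forall fun η hη => ?_)
    exact ContinuousAt.rpow_const (by fun_prop)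
      (Or.inl (one_add_exp_mul_rootFactor_pos hn hη).ne')

lemma strictMono_Tp (hn : 0 < n) : StrictMono (Tp n k) := fun _ _ hpq =>
  setIntegral_lt_setIntegral_of_forall_lt measurableSet_Iio (by simp [volume_Iio])
    (integrableOn_Tintegrand hn _) (integrableOn_Tintegrand hn _)
    fun _ hη => strictMono_Tintegrand hn hη hpq

lemma tendsto_Tintegrand_atBot (hn : 0 < n) (hη : η < 0) :
    Tendsto (Tintegrand n k · η) atBot (𝓝 0) := by
  have hexp : Tendsto (fun p => exp (η + p) * rootFactor n k η ^ (-(1 : ℝ) / 2)) atBot (𝓝 0) := by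
    simpa using (tendsto_exp_atBot.comp (tendsto_atBot_add_const_left atBot η tendsto_id)).mul_const
      (rootFactor n k η ^ (-(1 : ℝ) / 2))
  exact tendsto_of_tendsto_of_tendsto_of_le_of_le tendsto_const_nhds hexp
    (fun _ => (Tintegrand_pos hn hη).le) fun _ => Tintegrand_le_exp_mul hn hη

lemma tendsto_Tp_atBot (hn : 0 < n) : Tendsto (Tp n k) atBot (𝓝 0) := by
  have h := tendsto_integral_filter_of_dominated_convergence _
    (Eventually.of_forall fun _ => measurable_Tintegrand.aestronglyMeasurable)
    ((eventually_le_atBot 0).mono fun _ hp => ae_norm_Tintegrand_le hn hp)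
    (integrableOn_const_mul_exp_Iio (dominatingConst n k 0))
    ((ae_restrict_iff' measurableSet_Iio).mpr
      (Eventually.of_forall fun _ hη => tendsto_Tintegrand_atBot (k := k) hn hη))
  rwa [integral_zero] at h

lemma half_le_Tp (hn : 0 < n) {A : ℝ} (hA : 0 ≤ A) : A / 2 ≤ Tp n k A := by
  have hlow : ∀ η ∈ Ico (-A) 0, (1 / 2 : ℝ) ≤ Tintegrand n k A η := by
    intro η ⟨hAη, hη⟩
    have hbase : 1 + exp (-2 * η - 2 * A) * rootFactor n k η ≤ 2 := by
      have := rootFactor_le_one (k := k) hn hη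
      have := rootFactor_pos (k := k) hn hη
      have : exp (-2 * η - 2 * A) ≤ 1 := exp_le_one_iff.mpr (by linarith)
      nlinarith
    calc (1 / 2 : ℝ) = 2 ^ (-1 : ℝ) := by norm_num
      _ ≤ 2 ^ (-(1 : ℝ) / 2) := rpow_le_rpow_of_exponent_le one_le_two (by norm_num)
      _ ≤ Tintegrand n k A η :=
          rpow_le_rpow_of_nonpos (one_add_exp_mul_rootFactor_pos hn hη) hbase (by norm_num)
  have hvol : volume.real (Ico (-A) 0) = A := by simp [measureReal_def, volume_Ico, hA]
  calc A / 2 = 1 / 2 * volume.real (Ico (-A) 0) := by rw [hvol]; ring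
    _ ≤ ∫ η in Ico (-A) 0, Tintegrand n k A η :=
        setIntegral_ge_of_const_le_real measurableSet_Ico (by simp [volume_Ico]) hlow
          ((integrableOn_Tintegrand hn A).mono_set fun _ hη => hη.2)
    _ ≤ Tp n k A :=
        setIntegral_mono_set (integrableOn_Tintegrand hn A)
          ((ae_restrict_iff' measurableSet_Iio).mpr
            (Eventually.of_forall fun _ hη => (Tintegrand_pos hn hη).le))
          (Eventually.of_forall fun _ hη => hη.2)

lemma tendsto_Tp_atTop (hn : 0 < n) : Tendsto (Tp n k) atTop atTop :=
  tendsto_atTop_mono' atTop ((eventually_ge_atTop 0).mono fun _ hA => half_le_Tp hn hA)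
    (tendsto_id.atTop_div_const two_pos)

end

theorem stmt4_general (n k : ℕ) (hn : 3 ≤ n) :
    (∀ p : ℝ, IntegrableOn (Tintegrand n k p) (Set.Iio (0 : ℝ)))
    ∧ Continuous (Tp n k)
    ∧ StrictMono (Tp n k)
    ∧ Tendsto (Tp n k) atBot (nhds 0)
    ∧ Tendsto (Tp n k) atTop atTop := by
  have hn₀ : 0 < n := by omega
  exact ⟨integrableOn_Tintegrand hn₀, continuous_Tp hn₀, strictMono_Tp hn₀,
    tendsto_Tp_atBot hn₀, tendsto_Tp_atTop hn₀⟩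

/-- for `n ≥ 3`, `2 ≤ k ≤ n`, the function `p ↦ T_p` is well defined (the integral
converges for every `p`), continuous, strictly increasing, with `T_p → 0` as `p → −∞` and
`T_p → ∞` as `p → +∞`. -/
theorem stmt4 (n k : ℕ) (hn : 3 ≤ n) (hk2 : 2 ≤ k) (hkn : k ≤ n) :
    (∀ p : ℝ, IntegrableOn (Tintegrand n k p) (Set.Iio (0 : ℝ)))
    ∧ Continuous (Tp n k)
    ∧ StrictMono (Tp n k)
    ∧ Tendsto (Tp n k) atBot (nhds 0)
    ∧ Tendsto (Tp n k) atTop atTop :=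
  stmt4_general n k hn
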